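/- For n ≥ 2, the number of Dyck paths of semi-length n with (sum of peak heights) − (number of peaks) = 2 equals the number of fully commutative elements of Coxeter length 2 in S_n, and for n = 4 (semi-length 4) this number T(4,2) equals 5. -/

import Mathlib

attribute [local instance] Classical.propDecidable

/-- The set of Dyck paths of semi-length `n`, encoded as the set `U ⊆ {0, …, 2n-1}` of
positions of up-steps, such that there are `n` up-steps and every prefix has at least
as many up-steps as down-steps. -/
noncomputable def dyckPaths (n : ℕ) : Finset (Finset ℕ) :=
  (Finset.range (2 * n)).powerset.filter
    (fun U => U.card = n ∧ ∀ t ∈ Finset.range (2 * n + 1), t ≤ 2 * (U ∩ Finset.range t).card)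

/-- The set of positions `i` at which the Dyck path (with up-step set `U`) has a peak:
an up-step at `i` immediately followed by a down-step at `i+1`. -/
def peakSet (n : ℕ) (U : Finset ℕ) : Finset ℕ :=
  (Finset.range (2 * n)).filter (fun i => i ∈ U ∧ i + 1 ∉ U ∧ i + 1 < 2 * n)

/-- The height of the peak at position `i`: the y-coordinate after the up-step at `i`. -/
def peakHeight (U : Finset ℕ) (i : ℕ) : ℕ :=
  2 * (U ∩ Finset.range (i + 1)).card - (i + 1)

/-- The statistic (sum of peak heights) − (number of peaks) of a Dyck path. -/
def statDiff (n : ℕ) (U : Finset ℕ) : ℕ :=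
  (∑ i ∈ peakSet n U, peakHeight U i) - (peakSet n U).card

/-- `T n k` is the number of Dyck paths of semi-length `n` with
(sum of peak heights) − (number of peaks) equal to `k`. -/
noncomputable def T (n k : ℕ) : ℕ :=
  ((dyckPaths n).filter (fun U => statDiff n U = k)).card


/-- The `i`-th simple transposition in the symmetric group `S_n` on `{0, …, n-1}`,
for `1 ≤ i ≤ n - 1` (and the identity otherwise). -/
def sgen (n : ℕ) (i : ℕ) : Equiv.Perm (Fin n) :=
  if h : 0 < i ∧ i < n then Equiv.swap ⟨i - 1, by omega⟩ ⟨i, by omega⟩ else 1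

/-- The product of the word `l` of simple transpositions in `S_n`. -/
def wprod (n : ℕ) (l : List ℕ) : Equiv.Perm (Fin n) :=
  (l.map (sgen n)).prod

/-- `l` is a reduced word for `w ∈ S_n`. -/
def IsReducedWord (n : ℕ) (w : Equiv.Perm (Fin n)) (l : List ℕ) : Prop :=
  (∀ i ∈ l, 1 ≤ i ∧ i + 1 ≤ n) ∧ wprod n l = w ∧
    ∀ l' : List ℕ, (∀ i ∈ l', 1 ≤ i ∧ i + 1 ≤ n) → wprod n l' = w → l.length ≤ l'.length

/-- `w ∈ S_n` is fully commutative: no reduced word for `w` contains a factor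
`[i, i', i]` with `|i - i'| = 1`. -/
def FullyCommutative (n : ℕ) (w : Equiv.Perm (Fin n)) : Prop :=
  ∀ l : List ℕ, IsReducedWord n w l →
    ∀ i i' : ℕ, (i + 1 = i' ∨ i' + 1 = i) → ¬ ([i, i', i] <:+: l)

/-!
Record a Dyck path of semi-length `n` by the heights `e 0, …, e (n - 1)` from which its
up-steps start. Then (sum of peak heights) − (number of peaks) is the sum of `e k` over the
up-steps `k` that are peaks, and an up-step starting at positive height climbs straight to a
peak starting at least as high. So the paths with statistic `2` have either two peaks `p < q`
starting at height `1`, or one peak `p` starting at height `2` preceded by the up-step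
`q = p - 1` at height `1`, and all other up-steps at height `0`. They are thus indexed by the
pairs `1 ≤ p, q ≤ n - 1` with `p < q` or `p = q + 1`.

The same pairs index the elements of Coxeter length `2` of `S_n` as the products `s_p s_q`:
`s_p s_q = s_q s_p` when `|p - q| ≥ 2`, and `p` is recovered as the image of the least point
moved by `s_p s_q`. Their reduced words all have length `2`, so they are fully commutative.
-/

open Finset

theorem Finset.eq_singleton_or_eq_pair_of_sum_eq_two {α : Type*} [DecidableEq α]
    {s : Finset α} {f : α → ℕ} (hf : ∀ a ∈ s, f a ≠ 0) (hs : ∑ a ∈ s, f a = 2) :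
    (∃ a, s = {a} ∧ f a = 2) ∨ ∃ a b, a ≠ b ∧ s = {a, b} ∧ f a = 1 ∧ f b = 1 := by
  have hcard : #s • 1 ≤ ∑ a ∈ s, f a :=
    card_nsmul_le_sum s f 1 fun a ha => Nat.one_le_iff_ne_zero.mpr (hf a ha)
  rw [hs, smul_eq_mul, mul_one] at hcard
  interval_cases hc : #s
  · simp [card_eq_zero.mp hc] at hs
  · obtain ⟨a, rfl⟩ := card_eq_one.mp hc
    exact Or.inl ⟨a, rfl, by simpa using hs⟩
  · obtain ⟨a, b, hab, rfl⟩ := card_eq_two.mp hc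
    rw [sum_pair hab] at hs
    have := hf a (by simp)
    have := hf b (by simp)
    exact Or.inr ⟨a, b, hab, rfl, by omega, by omega⟩

theorem Finset.card_inter_range_orderEmbOfFin {n : ℕ} {U : Finset ℕ} (h : #U = n) (k : Fin n) :
    #(U ∩ range (U.orderEmbOfFin h k)) = k := by
  have : U ∩ range (U.orderEmbOfFin h k) = (Iio k).map (U.orderEmbOfFin h).toEmbedding := by
    ext x
    simp only [mem_inter, mem_range, mem_map, mem_Iio, RelEmbedding.coe_toEmbedding]
    constructor
    · rintro ⟨hx, hlt⟩
      obtain ⟨j, rfl⟩ : x ∈ Set.range (U.orderEmbOfFin h) := by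
        rwa [range_orderEmbOfFin, mem_coe]
      exact ⟨j, (U.orderEmbOfFin h).lt_iff_lt.mp hlt, rfl⟩
    · rintro ⟨j, hj, rfl⟩
      exact ⟨orderEmbOfFin_mem U h j, (U.orderEmbOfFin h).lt_iff_lt.mpr hj⟩
  rw [this, card_map, Fin.card_Iio]

/-- The reduced words `[p, q]` of the length-two elements of `S_n`, taking `p < q` when `s_p` and
`s_q` commute. -/
def normalPairs (n : ℕ) : Finset (ℕ × ℕ) :=
  {pq ∈ Icc 1 (n - 1) ×ˢ Icc 1 (n - 1) | pq.1 < pq.2 ∨ pq.1 = pq.2 + 1}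

theorem mem_normalPairs {n p q : ℕ} :
    (p, q) ∈ normalPairs n ↔ 1 ≤ p ∧ p + 1 ≤ n ∧ 1 ≤ q ∧ q + 1 ≤ n ∧ (p < q ∨ p = q + 1) := by
  simp only [normalPairs, mem_filter, mem_product, mem_Icc]
  omega

theorem card_normalPairs_four : #(normalPairs 4) = 5 := by
  rw [show normalPairs 4 = {(1, 2), (1, 3), (2, 3), (2, 1), (3, 2)} by
    ext ⟨p, q⟩
    simp only [mem_normalPairs, mem_insert, mem_singleton, Prod.mk.injEq]
    omega]
  rfl

/-- `e k` is the height from which the `k`-th up-step (counting from `0`) starts, so that this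
up-step is the `upPos e k`-th step of the path. -/
structure IsUpStepHeights (n : ℕ) (e : ℕ → ℕ) : Prop where
  zero : e 0 = 0
  succ_le : ∀ k, e (k + 1) ≤ e k + 1
  eq_zero : ∀ k, n ≤ k → e k = 0

def upPos (e : ℕ → ℕ) (k : ℕ) : ℕ := 2 * k - e k

def upSteps (n : ℕ) (e : ℕ → ℕ) : Finset ℕ := (range n).image (upPos e)

/-- The indices of the up-steps that are followed by a down-step. -/
def peakIndices (n : ℕ) (e : ℕ → ℕ) : Finset ℕ := {k ∈ range n | e (k + 1) ≤ e k}

def peakWeight (n : ℕ) (e : ℕ → ℕ) : ℕ := ∑ k ∈ peakIndices n e, e k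

namespace IsUpStepHeights

variable {n : ℕ} {e : ℕ → ℕ}

theorem le_self (h : IsUpStepHeights n e) (k : ℕ) : e k ≤ k := by
  induction k with
  | zero => exact h.zero.le
  | succ k ih => have := h.succ_le k; omega

theorem strictMono_upPos (h : IsUpStepHeights n e) : StrictMono (upPos e) :=
  strictMono_nat_of_lt_succ fun k => by
    have := h.le_self k; have := h.succ_le k; unfold upPos; omega

theorem card_upSteps (h : IsUpStepHeights n e) : #(upSteps n e) = n := by
  rw [upSteps, card_image_of_injective _ h.strictMono_upPos.injective, card_range]

theorem card_upSteps_inter_range (h : IsUpStepHeights n e) (t : ℕ) :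
    #(upSteps n e ∩ range t) = #{k ∈ range n | upPos e k < t} := by
  have : upSteps n e ∩ range t = {k ∈ range n | upPos e k < t}.image (upPos e) := by
    ext x
    simp only [upSteps, mem_inter, mem_image, mem_filter, mem_range]
    grind
  rw [this, card_image_of_injective _ h.strictMono_upPos.injective]

theorem upSteps_mem_dyckPaths (h : IsUpStepHeights n e) : upSteps n e ∈ dyckPaths n := by
  simp only [dyckPaths, mem_filter, mem_powerset]
  refine ⟨fun x hx => ?_, h.card_upSteps, fun t ht => ?_⟩
  · obtain ⟨k, hk, rfl⟩ := mem_image.mp hx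
    simp only [mem_range, upPos] at hk ⊢
    omega
  · have hsub : range (min n ((t + 1) / 2)) ⊆ {k ∈ range n | upPos e k < t} := fun k hk => by
      rw [mem_range] at hk
      rw [mem_filter, mem_range, upPos]
      omega
    have := card_le_card hsub
    rw [card_range] at this
    rw [mem_range] at ht
    rw [h.card_upSteps_inter_range]
    omega

theorem upPos_add_one_mem_upSteps_iff (h : IsUpStepHeights n e) {k : ℕ} (hk : k < n) :
    upPos e k + 1 ∈ upSteps n e ↔ e k < e (k + 1) := by
  have hk' := h.le_self k
  have hk1 := h.le_self (k + 1)
  constructor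
  · intro hmem
    obtain ⟨j, -, hj⟩ := mem_image.mp hmem
    have hkj : k < j := h.strictMono_upPos.lt_iff_lt.mp (by omega)
    have hle : upPos e (k + 1) ≤ upPos e j := h.strictMono_upPos.monotone hkj
    have hlt : upPos e k < upPos e (k + 1) := h.strictMono_upPos (by omega)
    unfold upPos at *
    omega
  · intro hlt
    have hk1n : k + 1 < n := by
      by_contra hge
      rw [h.eq_zero (k + 1) (by omega)] at hlt
      omega
    refine mem_image.mpr ⟨k + 1, mem_range.mpr hk1n, ?_⟩
    have := h.succ_le k
    unfold upPos
    omega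

theorem peakSet_upSteps (h : IsUpStepHeights n e) :
    peakSet n (upSteps n e) = (peakIndices n e).image (upPos e) := by
  ext i
  simp only [peakSet, peakIndices, mem_filter, mem_image, mem_range]
  constructor
  · rintro ⟨-, hi, hi1, -⟩
    obtain ⟨k, hk, rfl⟩ := mem_image.mp hi
    rw [mem_range] at hk
    rw [h.upPos_add_one_mem_upSteps_iff hk, not_lt] at hi1
    exact ⟨k, ⟨hk, hi1⟩, rfl⟩
  · rintro ⟨k, ⟨hk, hpeak⟩, rfl⟩
    rw [h.upPos_add_one_mem_upSteps_iff hk, not_lt]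
    refine ⟨by unfold upPos; omega, mem_image_of_mem _ (mem_range.mpr hk), hpeak,
      by unfold upPos; omega⟩

theorem peakHeight_upSteps (h : IsUpStepHeights n e) {k : ℕ} (hk : k < n) :
    peakHeight (upSteps n e) (upPos e k) = e k + 1 := by
  have hfilter : {j ∈ range n | upPos e j < upPos e k + 1} = range (k + 1) := by
    ext j
    simp only [mem_filter, mem_range, Nat.lt_succ_iff, h.strictMono_upPos.le_iff_le]
    omega
  rw [peakHeight, h.card_upSteps_inter_range, hfilter, card_range]
  have := h.le_self k
  unfold upPos
  omega

theorem statDiff_upSteps (h : IsUpStepHeights n e) :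
    statDiff n (upSteps n e) = peakWeight n e := by
  have hinj : Set.InjOn (upPos e) (peakIndices n e) := h.strictMono_upPos.injective.injOn
  have hheight : ∀ k ∈ peakIndices n e, peakHeight (upSteps n e) (upPos e k) = e k + 1 :=
    fun k hk => h.peakHeight_upSteps (mem_range.mp (mem_filter.mp hk).1)
  rw [statDiff, h.peakSet_upSteps, sum_image hinj, card_image_of_injOn hinj,
    sum_congr rfl hheight, sum_add_distrib, sum_const, smul_eq_mul, mul_one, peakWeight,
    Nat.add_sub_cancel]

theorem eq_of_upSteps_eq {e' : ℕ → ℕ} (h : IsUpStepHeights n e)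
    (h' : IsUpStepHeights n e') (heq : upSteps n e = upSteps n e') : e = e' := by
  have hpos : ∀ {f : ℕ → ℕ} (hf : IsUpStepHeights n f) (k : Fin n),
      upPos f k = (upSteps n f).orderEmbOfFin hf.card_upSteps k := fun hf k =>
    congrFun (orderEmbOfFin_unique _ (fun k => mem_image_of_mem _ (mem_range.mpr k.2))
      (hf.strictMono_upPos.comp Fin.val_strictMono)) k
  funext k
  by_cases hk : k < n
  · have := hpos h ⟨k, hk⟩
    simp only [heq, ← hpos h' ⟨k, hk⟩] at this
    have := h.le_self k
    have := h'.le_self k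
    unfold upPos at *
    omega
  · rw [h.eq_zero k (by omega), h'.eq_zero k (by omega)]

theorem exists_peak_ge (h : IsUpStepHeights n e) {k : ℕ} (hk : e k ≠ 0) :
    ∃ j ∈ peakIndices n e, k ≤ j ∧ e j = e k + (j - k) := by
  induction hd : n - k generalizing k with
  | zero => exact absurd (h.eq_zero k (by omega)) hk
  | succ d ih =>
    by_cases hpeak : e (k + 1) ≤ e k
    · exact ⟨k, mem_filter.mpr ⟨mem_range.mpr (by omega), hpeak⟩, le_rfl, by simp⟩
    · have := h.succ_le k
      obtain ⟨j, hj, hkj, hej⟩ := ih (k := k + 1) (by omega) (by omega)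
      exact ⟨j, hj, by omega, by omega⟩

end IsUpStepHeights

theorem exists_isUpStepHeights_of_mem_dyckPaths {n : ℕ} {U : Finset ℕ} (hU : U ∈ dyckPaths n) :
    ∃ e, IsUpStepHeights n e ∧ upSteps n e = U := by
  simp only [dyckPaths, mem_filter, mem_powerset] at hU
  obtain ⟨hsub, hcard, hprefix⟩ := hU
  set u := U.orderEmbOfFin hcard
  have hu : ∀ k, u k ∈ U := orderEmbOfFin_mem U hcard
  have hle : ∀ k (hk : k < n), u ⟨k, hk⟩ ≤ 2 * k := by
    intro k hk
    have hlt := mem_range.mp (hsub (hu ⟨k, hk⟩))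
    have := hprefix (u ⟨k, hk⟩) (mem_range.mpr (by omega))
    rwa [card_inter_range_orderEmbOfFin] at this
  refine ⟨fun k => if hk : k < n then 2 * k - u ⟨k, hk⟩ else 0, ⟨?_, fun k => ?_, ?_⟩, ?_⟩
  · simp
  · by_cases hk : k + 1 < n
    · have := u.strictMono (show (⟨k, by omega⟩ : Fin n) < ⟨k + 1, hk⟩ from Nat.lt_succ_self k)
      have := hle k (by omega)
      have := hle (k + 1) hk
      simp only [dif_pos hk, dif_pos (show k < n by omega)]
      omega
    · simp [dif_neg hk]
  · intro k hk
    simp [dif_neg (not_lt.mpr hk)]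
  · have hupPos : ∀ k (hk : k < n),
        upPos (fun k => if hk : k < n then 2 * k - u ⟨k, hk⟩ else 0) k = u ⟨k, hk⟩ := by
      intro k hk
      have := hle k hk
      simp only [upPos, dif_pos hk]
      omega
    ext x
    simp only [upSteps, mem_image, mem_range]
    constructor
    · rintro ⟨k, hk, rfl⟩
      exact hupPos k hk ▸ hu _
    · intro hx
      obtain ⟨k, rfl⟩ : x ∈ Set.range u := by rw [range_orderEmbOfFin]; exact hx
      exact ⟨k, k.2, hupPos k k.2⟩

def pairHeights (pq : ℕ × ℕ) (k : ℕ) : ℕ :=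
  if k = pq.1 then (if pq.1 < pq.2 then 1 else 2) else if k = pq.2 then 1 else 0

section PairHeights

variable {n : ℕ}

theorem isUpStepHeights_pairHeights {pq : ℕ × ℕ} (h : pq ∈ normalPairs n) :
    IsUpStepHeights n (pairHeights pq) := by
  obtain ⟨p, q⟩ := pq
  rw [mem_normalPairs] at h
  refine ⟨?_, fun k => ?_, fun k hk => ?_⟩ <;> simp only [pairHeights] <;> split_ifs <;> omega

theorem peakWeight_pairHeights {pq : ℕ × ℕ} (h : pq ∈ normalPairs n) :
    peakWeight n (pairHeights pq) = 2 := by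
  obtain ⟨p, q⟩ := pq
  rw [mem_normalPairs] at h
  rw [peakWeight, peakIndices, sum_filter, sum_eq_add_of_mem p q (mem_range.mpr (by omega))
    (mem_range.mpr (by omega)) (by omega)]
  · simp only [pairHeights]
    split_ifs <;> omega
  · intro k _ hk
    simp only [pairHeights]
    split_ifs <;> omega

theorem pairHeights_injOn : Set.InjOn pairHeights (normalPairs n) := by
  rintro ⟨p, q⟩ h ⟨p', q'⟩ h' heq
  rw [SetLike.mem_coe, mem_normalPairs] at h h'
  have hp := congrFun heq p
  have hq := congrFun heq q
  have hp' := congrFun heq p'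
  have hq' := congrFun heq q'
  simp only [pairHeights] at hp hq hp' hq'
  simp only [Prod.mk.injEq]
  split_ifs at hp hq hp' hq' <;> omega

end PairHeights

theorem IsUpStepHeights.exists_pairHeights_eq {n : ℕ} {e : ℕ → ℕ} (h : IsUpStepHeights n e)
    (hweight : peakWeight n e = 2) : ∃ pq ∈ normalPairs n, pairHeights pq = e := by
  set S := {k ∈ peakIndices n e | e k ≠ 0}
  have hS : ∑ k ∈ S, e k = 2 := by rwa [sum_filter_ne_zero]
  have hclimb : ∀ k, e k ≠ 0 → ∃ j ∈ S, k ≤ j ∧ e j = e k + (j - k) := fun k hk => by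
    obtain ⟨j, hj, hkj, hej⟩ := h.exists_peak_ge hk
    exact ⟨j, mem_filter.mpr ⟨hj, by omega⟩, hkj, hej⟩
  have hlt : ∀ j ∈ S, j < n := fun j hj => mem_range.mp (mem_filter.mp (mem_filter.mp hj).1).1
  have hne : ∀ j ∈ S, e j ≠ 0 := fun j hj => (mem_filter.mp hj).2
  have hpos : ∀ j ∈ S, j ≠ 0 := fun j hj hj0 => hne j hj (hj0 ▸ h.zero)
  clear_value S
  rcases eq_singleton_or_eq_pair_of_sum_eq_two hne hS with
    ⟨p, rfl, hp⟩ | ⟨p, q, hpq, hSpq, hp, hq⟩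
  · have hclimb' : ∀ k, e k ≠ 0 → k = p ∨ (k + 1 = p ∧ e k = 1) := fun k hk => by
      obtain ⟨j, hj, hkj, hej⟩ := hclimb k hk
      obtain rfl := mem_singleton.mp hj
      omega
    have hpn := hlt p (mem_singleton_self p)
    have hp0 := hpos p (mem_singleton_self p)
    have hp1 : e (p - 1) = 1 := by
      have := h.succ_le (p - 1)
      rw [Nat.sub_add_cancel (by omega)] at this
      have := hclimb' (p - 1) (by omega)
      omega
    have hp2 : p ≠ 1 := fun hp1' => by simp [hp1', h.zero] at hp1
    refine ⟨(p, p - 1), mem_normalPairs.mpr (by omega), funext fun k => ?_⟩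
    have := hclimb' k
    simp only [pairHeights]
    split_ifs <;> subst_vars <;> omega
  · obtain ⟨p, q, hpq, rfl, hp, hq⟩ : ∃ a b, a < b ∧ S = {a, b} ∧ e a = 1 ∧ e b = 1 := by
      rcases hpq.lt_or_gt with hlt | hlt
      · exact ⟨p, q, hlt, hSpq, hp, hq⟩
      · exact ⟨q, p, hlt, hSpq.trans (pair_comm p q), hq, hp⟩
    have hclimb' : ∀ k, e k ≠ 0 → k = p ∨ k = q := fun k hk => by
      obtain ⟨j, hj, hkj, hej⟩ := hclimb k hk
      rcases mem_insert.mp hj with rfl | hj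
      · omega
      · obtain rfl := mem_singleton.mp hj
        omega
    have := hlt q (by simp)
    have := hpos p (by simp)
    refine ⟨(p, q), mem_normalPairs.mpr (by omega), funext fun k => ?_⟩
    have := hclimb' k
    simp only [pairHeights]
    split_ifs <;> subst_vars <;> omega

theorem T_two_eq_card_normalPairs (n : ℕ) : T n 2 = #(normalPairs n) := by
  have himage : {U ∈ dyckPaths n | statDiff n U = 2} =
      (normalPairs n).image (upSteps n ∘ pairHeights) := by
    ext U
    simp only [mem_filter, mem_image, Function.comp_apply]
    constructor
    · rintro ⟨hU, hstat⟩
      obtain ⟨e, he, rfl⟩ := exists_isUpStepHeights_of_mem_dyckPaths hU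
      obtain ⟨pq, hpq, rfl⟩ := he.exists_pairHeights_eq (he.statDiff_upSteps ▸ hstat)
      exact ⟨pq, hpq, rfl⟩
    · rintro ⟨pq, hpq, rfl⟩
      have he := isUpStepHeights_pairHeights hpq
      exact ⟨he.upSteps_mem_dyckPaths, by rw [he.statDiff_upSteps, peakWeight_pairHeights hpq]⟩
  rw [T, himage, card_image_of_injOn]
  intro pq hpq pq' hpq' heq
  exact pairHeights_injOn hpq hpq' ((isUpStepHeights_pairHeights hpq).eq_of_upSteps_eq
    (isUpStepHeights_pairHeights hpq') heq)

def adjSwap (i x : ℕ) : ℕ := if x + 1 = i then i else if x = i then i - 1 else x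

section SimpleTranspositions

variable {n i j : ℕ}

theorem val_sgen_apply (hi : 1 ≤ i) (hin : i + 1 ≤ n) (x : Fin n) :
    (sgen n i x : ℕ) = adjSwap i x := by
  obtain ⟨x, hx⟩ := x
  rw [sgen, dif_pos (by omega), Equiv.swap_apply_def]
  unfold adjSwap
  split_ifs <;> simp only [Fin.mk.injEq] at * <;> omega

theorem sgen_mul_self (hi : 1 ≤ i) (hin : i + 1 ≤ n) : sgen n i * sgen n i = 1 := by
  rw [sgen, dif_pos (by omega), Equiv.swap_mul_self]

theorem sign_sgen (hi : 1 ≤ i) (hin : i + 1 ≤ n) : Equiv.Perm.sign (sgen n i) = -1 := by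
  rw [sgen, dif_pos (by omega)]
  exact Equiv.Perm.sign_swap (by simp [Fin.ext_iff]; omega)

theorem sgen_mul_comm (hi : 1 ≤ i) (hjn : j + 1 ≤ n) (hij : i + 2 ≤ j) :
    sgen n i * sgen n j = sgen n j * sgen n i := by
  have hin : i + 1 ≤ n := by omega
  have hj : 1 ≤ j := by omega
  ext x
  rw [Equiv.Perm.mul_apply, Equiv.Perm.mul_apply, val_sgen_apply hi hin, val_sgen_apply hj hjn,
    val_sgen_apply hj hjn, val_sgen_apply hi hin]
  unfold adjSwap
  split_ifs <;> omega

theorem sgen_injOn : Set.InjOn (sgen n) {i | 1 ≤ i ∧ i + 1 ≤ n} := by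
  rintro i ⟨hi, hin⟩ j ⟨hj, hjn⟩ heq
  have := val_sgen_apply hj hjn ⟨i - 1, by omega⟩
  rw [← heq, val_sgen_apply hi hin] at this
  simp only [adjSwap] at this
  split_ifs at this <;> omega

end SimpleTranspositions

section Words

variable {n : ℕ}

theorem sign_wprod {l : List ℕ} (hl : ∀ i ∈ l, 1 ≤ i ∧ i + 1 ≤ n) :
    Equiv.Perm.sign (wprod n l) = (-1) ^ l.length := by
  induction l with
  | nil => simp [wprod]
  | cons i l ih =>
    have hi := hl i List.mem_cons_self
    rw [wprod, List.map_cons, List.prod_cons, map_mul, sign_sgen hi.1 hi.2, ← wprod,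
      ih fun j hj => hl j (List.mem_cons_of_mem i hj), List.length_cons, pow_succ']

theorem IsReducedWord.fullyCommutative {w : Equiv.Perm (Fin n)} {l : List ℕ}
    (hl : IsReducedWord n w l) (hlen : l.length < 3) : FullyCommutative n w := by
  intro l' hl' i i' _ hinfix
  have := hl'.2.2 l hl.1 hl.2.1
  have := hinfix.length_le
  simp only [List.length_cons, List.length_nil] at this
  omega

end Words

section NormalPairs

variable {n : ℕ}

theorem val_wprod_pair_apply {p q : ℕ} (h : (p, q) ∈ normalPairs n) (x : Fin n) :
    (wprod n [p, q] x : ℕ) = adjSwap p (adjSwap q x) := by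
  rw [mem_normalPairs] at h
  simp only [wprod, List.map_cons, List.map_nil, List.prod_cons, List.prod_nil, mul_one,
    Equiv.Perm.mul_apply, val_sgen_apply h.1 h.2.1, val_sgen_apply h.2.2.1 h.2.2.2.1]

theorem adjSwap_adjSwap_min_sub_one {p q : ℕ} (h : (p, q) ∈ normalPairs n) :
    adjSwap p (adjSwap q (min p q - 1)) = p := by
  rw [mem_normalPairs] at h
  unfold adjSwap
  split_ifs <;> omega

theorem wprod_pair_ne_one {p q : ℕ} (h : (p, q) ∈ normalPairs n) : wprod n [p, q] ≠ 1 := by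
  intro h1
  have hpq := mem_normalPairs.mp h
  have := val_wprod_pair_apply h ⟨min p q - 1, by omega⟩
  rw [h1, adjSwap_adjSwap_min_sub_one h, Equiv.Perm.one_apply, Fin.val_mk] at this
  omega

theorem isReducedWord_pair {p q : ℕ} (h : (p, q) ∈ normalPairs n) :
    IsReducedWord n (wprod n [p, q]) [p, q] := by
  have hpq := mem_normalPairs.mp h
  have hvalid : ∀ i ∈ [p, q], 1 ≤ i ∧ i + 1 ≤ n := by
    simp only [List.mem_cons, List.not_mem_nil, or_false]
    rintro i (rfl | rfl) <;> omega
  refine ⟨hvalid, rfl, fun l hl hw => ?_⟩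
  have hsign := sign_wprod hl
  rw [hw, sign_wprod hvalid] at hsign
  match l, hsign with
  | [], _ => exact absurd hw.symm (by simpa [wprod] using wprod_pair_ne_one h)
  | [_], hsign => simp at hsign
  | _ :: _ :: _, _ => simp

theorem wprod_pair_injOn :
    Set.InjOn (fun pq : ℕ × ℕ => wprod n [pq.1, pq.2]) (normalPairs n) := by
  rintro ⟨p, q⟩ h ⟨p', q'⟩ h' heq
  rw [mem_coe] at h h'
  have hpq := mem_normalPairs.mp h
  have hpq' := mem_normalPairs.mp h'
  simp only at heq
  have happ : ∀ x < n, adjSwap p (adjSwap q x) = adjSwap p' (adjSwap q' x) := fun x hx => by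
    rw [← val_wprod_pair_apply h ⟨x, hx⟩, ← val_wprod_pair_apply h' ⟨x, hx⟩, heq]
  have hm := happ (min p q - 1) (by omega)
  have hm' := happ (min p' q' - 1) (by omega)
  rw [adjSwap_adjSwap_min_sub_one h] at hm
  rw [adjSwap_adjSwap_min_sub_one h'] at hm'
  -- `min p q - 1` is the least point moved by `s_p s_q`, and it is sent to `p`
  obtain rfl : p = p' := by
    unfold adjSwap at hm hm'
    split_ifs at hm hm' <;> omega
  have hs : sgen n q = sgen n q' := by
    simpa [wprod] using heq
  rw [sgen_injOn ⟨hpq.2.2.1, hpq.2.2.2.1⟩ ⟨hpq'.2.2.1, hpq'.2.2.2.1⟩ hs]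

theorem exists_mem_normalPairs_of_isReducedWord {w : Equiv.Perm (Fin n)} {a b : ℕ}
    (hw : IsReducedWord n w [a, b]) : ∃ pq ∈ normalPairs n, wprod n [pq.1, pq.2] = w := by
  obtain ⟨hvalid, rfl, hmin⟩ := hw
  have ha := hvalid a (by simp)
  have hb := hvalid b (by simp)
  have hab : a ≠ b := by
    rintro rfl
    have := hmin [] (by simp) (by simp [wprod, sgen_mul_self ha.1 ha.2])
    simp at this
  by_cases hnormal : a < b ∨ a = b + 1
  · exact ⟨(a, b), mem_normalPairs.mpr (by omega), rfl⟩
  · refine ⟨(b, a), mem_normalPairs.mpr (by omega), ?_⟩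
    simpa [wprod] using sgen_mul_comm hb.1 ha.2 (by omega)

theorem card_fullyCommutative_length_two :
    Nat.card {w : Equiv.Perm (Fin n) //
        FullyCommutative n w ∧ ∃ l : List ℕ, IsReducedWord n w l ∧ l.length = 2} =
      #(normalPairs n) := by
  have hiff : ∀ w : Equiv.Perm (Fin n),
      (FullyCommutative n w ∧ ∃ l : List ℕ, IsReducedWord n w l ∧ l.length = 2) ↔
        w ∈ (normalPairs n).image fun pq => wprod n [pq.1, pq.2] := by
    intro w
    rw [mem_image]
    constructor
    · rintro ⟨-, l, hl, hlen⟩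
      obtain ⟨a, b, rfl⟩ := List.length_eq_two.mp hlen
      exact exists_mem_normalPairs_of_isReducedWord hl
    · rintro ⟨⟨p, q⟩, h, rfl⟩
      exact ⟨(isReducedWord_pair h).fullyCommutative (by simp), [p, q], isReducedWord_pair h, rfl⟩
  rw [Nat.card_congr (Equiv.subtypeEquivRight hiff), Nat.card_eq_finsetCard,
    card_image_of_injOn wprod_pair_injOn]

end NormalPairs

theorem T_two_eq_card_fullyCommutative_general (n : ℕ) :
    T n 2 = Nat.card {w : Equiv.Perm (Fin n) //
        FullyCommutative n w ∧ ∃ l : List ℕ, IsReducedWord n w l ∧ l.length = 2} ∧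
    T 4 2 = 5 :=
  ⟨by rw [T_two_eq_card_normalPairs, card_fullyCommutative_length_two],
    by rw [T_two_eq_card_normalPairs, card_normalPairs_four]⟩

/-- For `n ≥ 2`, the number of Dyck paths of semi-length `n` with
(sum of peak heights) − (number of peaks) `= 2` equals the number of fully commutative
elements of Coxeter length `2` in `S_n`; and `T 4 2 = 5`. -/
theorem T_two_eq_card_fullyCommutative (n : ℕ) (hn : 2 ≤ n) :
    T n 2 = Nat.card {w : Equiv.Perm (Fin n) //
        FullyCommutative n w ∧ ∃ l : List ℕ, IsReducedWord n w l ∧ l.length = 2} ∧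
    T 4 2 = 5 :=
  T_two_eq_card_fullyCommutative_general n
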